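/- Let Ω ⊂ ℂⁿ be a bounded domain, m ≥ 1, and let d be a metric on Ω such that for some constant C₀ > 0 and all x, y ∈ Ω: g_m(x,y) − C₀ ≤ d(x,y) ≤ g_1(x,y) + C₀. Fix a base point ω ∈ Ω. Then there exist constants C₁, C₂ > 0 such that for all x, y ∈ Ω: log( C₁ / (|x−y| + max(δ_Ω(x), δ_Ω(y))) ) ≤ (x|y)_ω ≤ log( C₂ / (|x−y|^m + max(δ_Ω(x), δ_Ω(y))) ). -/
import Mathlib


open Set Metric Filter Bornology

noncomputable section

/-- The Euclidean distance from a point to the boundary of `Ω`. -/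
def bdist {n : ℕ} (Ω : Set (EuclideanSpace ℂ (Fin n))) (z : EuclideanSpace ℂ (Fin n)) : ℝ :=
  Metric.infDist z (frontier Ω)

/-- `g_k(x,y) = 2 log((|x−y|^k + max(δ(x),δ(y)))/√(δ(x)δ(y)))`. -/
def gK {n : ℕ} (Ω : Set (EuclideanSpace ℂ (Fin n))) (k : ℝ)
    (x y : EuclideanSpace ℂ (Fin n)) : ℝ :=
  2 * Real.log ((dist x y ^ k + max (bdist Ω x) (bdist Ω y)) /
    Real.sqrt (bdist Ω x * bdist Ω y))

/-- `d` restricted to `Ω` satisfies the axioms of a metric. -/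
def IsMetricOn {n : ℕ} (Ω : Set (EuclideanSpace ℂ (Fin n)))
    (d : EuclideanSpace ℂ (Fin n) → EuclideanSpace ℂ (Fin n) → ℝ) : Prop :=
  (∀ x ∈ Ω, d x x = 0) ∧ (∀ x ∈ Ω, ∀ y ∈ Ω, x ≠ y → 0 < d x y) ∧
  (∀ x ∈ Ω, ∀ y ∈ Ω, d x y = d y x) ∧
  (∀ x ∈ Ω, ∀ y ∈ Ω, ∀ z ∈ Ω, d x z ≤ d x y + d y z)

/-- The Gromov product `(x|y)_w = (d(x,w) + d(y,w) − d(x,y))/2`. -/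
def gromovProd {n : ℕ} (d : EuclideanSpace ℂ (Fin n) → EuclideanSpace ℂ (Fin n) → ℝ)
    (w x y : EuclideanSpace ℂ (Fin n)) : ℝ :=
  (d x w + d y w - d x y) / 2

lemma gk_log (u a b : ℝ) (ha : 0 < a) (hb : 0 < b) (hu : 0 ≤ u) :
    2 * Real.log ((u + max a b) / Real.sqrt (a * b)) =
      2 * Real.log (u + max a b) - Real.log a - Real.log b := by
  have hM : 0 < u + max a b :=
    add_pos_of_nonneg_of_pos hu (lt_of_lt_of_le ha (le_max_left a b))
  have hab : 0 < a * b := mul_pos ha hb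
  rw [Real.log_div hM.ne' (Real.sqrt_pos.mpr hab).ne', Real.log_sqrt hab.le,
    Real.log_mul ha.ne' hb.ne']
  ring

/-- inequality (4.1) in the proof of Theorem 1.1. If a metric `d` on a
bounded domain `Ω ⊂ ℂⁿ` satisfies `g_m − C₀ ≤ d ≤ g_1 + C₀`, then for a fixed base point
`ω ∈ Ω` there are `C₁, C₂ > 0` with
`log(C₁/(|x−y| + max(δ(x),δ(y)))) ≤ (x|y)_ω ≤ log(C₂/(|x−y|^m + max(δ(x),δ(y))))`. -/
theorem statement13 {n : ℕ} (Ω : Set (EuclideanSpace ℂ (Fin n)))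
    (hΩo : IsOpen Ω) (hΩc : IsConnected Ω) (hΩb : IsBounded Ω)
    (m : ℝ) (hm : 1 ≤ m)
    (d : EuclideanSpace ℂ (Fin n) → EuclideanSpace ℂ (Fin n) → ℝ)
    (hd : IsMetricOn Ω d)
    (C₀ : ℝ) (hC₀ : 0 < C₀)
    (hlow : ∀ x ∈ Ω, ∀ y ∈ Ω, gK Ω m x y - C₀ ≤ d x y)
    (hup : ∀ x ∈ Ω, ∀ y ∈ Ω, d x y ≤ gK Ω 1 x y + C₀)
    (ω : EuclideanSpace ℂ (Fin n)) (hω : ω ∈ Ω) :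
    ∃ C₁ > (0 : ℝ), ∃ C₂ > (0 : ℝ), ∀ x ∈ Ω, ∀ y ∈ Ω,
      Real.log (C₁ / (dist x y + max (bdist Ω x) (bdist Ω y))) ≤ gromovProd d ω x y ∧
      gromovProd d ω x y ≤
        Real.log (C₂ / (dist x y ^ m + max (bdist Ω x) (bdist Ω y))) := by
  rcases subsingleton_or_nontrivial (EuclideanSpace ℂ (Fin n)) with hsub | hnt
  · -- trivial one-point space
    refine ⟨1, one_pos, 1, one_pos, fun x hx y hy => ?_⟩
    have hΩu : Ω = univ := by
      ext z; simp only [mem_univ, iff_true]; exact (Subsingleton.elim ω z) ▸ hω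
    have hb0 : ∀ z, bdist Ω z = 0 := by
      intro z; simp [bdist, hΩu, Metric.infDist_empty]
    have hxy : x = y := Subsingleton.elim x y
    have hxω : x = ω := Subsingleton.elim x ω
    have hgp : gromovProd d ω x y = 0 := by
      have h0 : d ω ω = 0 := hd.1 ω hω
      simp [gromovProd, ← hxy, hxω, h0]
    have hd0 : dist x y = 0 := by rw [hxy, dist_self]
    have hm0 : (0:ℝ) ^ m = 0 := Real.zero_rpow (by linarith)
    rw [hgp, hd0, hb0, hb0, hm0]
    norm_num
  · -- main case
    have hfne : (frontier Ω).Nonempty := by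
      by_contra h
      rw [not_nonempty_iff_eq_empty] at h
      rcases isClopen_iff.mp (isClopen_iff_frontier_eq_empty.mpr h) with h' | h'
      · exact hΩc.nonempty.ne_empty h'
      · exact NormedSpace.unbounded_univ ℝ (EuclideanSpace ℂ (Fin n)) (h' ▸ hΩb)
    have hδ : ∀ z ∈ Ω, 0 < bdist Ω z := by
      intro z hz
      refine (isClosed_frontier.notMem_iff_infDist_pos hfne).mp ?_
      intro hzf
      have : z ∈ Ω ∩ frontier Ω := ⟨hz, hzf⟩
      rw [hΩo.inter_frontier_eq] at this
      exact this
    obtain ⟨r, hr⟩ := hΩb.closure.subset_closedBall ω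
    set R : ℝ := max r 1 with hR
    have hR1 : (1:ℝ) ≤ R := le_max_right r 1
    have hRpos : 0 < R := lt_of_lt_of_le one_pos hR1
    have hdistω : ∀ z ∈ Ω, dist z ω ≤ R := fun z hz =>
      le_trans (hr (subset_closure hz)) (le_max_left r 1)
    obtain ⟨p, hp⟩ := hfne
    have hδle : ∀ z ∈ Ω, bdist Ω z ≤ 2 * R := by
      intro z hz
      have h1 : bdist Ω z ≤ dist z p := Metric.infDist_le_dist_of_mem hp
      have h2 : dist z p ≤ dist z ω + dist ω p := dist_triangle z ω p
      have h3 : dist ω p ≤ R := by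
        calc dist ω p = dist p ω := dist_comm ω p
          _ ≤ r := hr (frontier_subset_closure hp)
          _ ≤ R := le_max_left r 1
      linarith [hdistω z hz]
    set A : ℝ := 3 * R with hA
    have hApos : 0 < A := by positivity
    set w : ℝ := bdist Ω ω with hw
    have hwpos : 0 < w := hδ ω hω
    refine ⟨w * Real.exp (-(3 / 2 * C₀)), by positivity,
      A * A * Real.exp (3 / 2 * C₀) / w, by positivity, fun x hx y hy => ?_⟩
    set a : ℝ := bdist Ω x with ha
    set b : ℝ := bdist Ω y with hb
    have hapos : 0 < a := hδ x hx
    have hbpos : 0 < b := hδ y hy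
    set s : ℝ := dist x y with hs
    have hspos : (0:ℝ) ≤ s := dist_nonneg
    have hMpos : 0 < s + max a b :=
      add_pos_of_nonneg_of_pos hspos (lt_of_lt_of_le hapos (le_max_left a b))
    have hsm : (0:ℝ) ≤ s ^ m := Real.rpow_nonneg hspos m
    have hMmpos : 0 < s ^ m + max a b :=
      add_pos_of_nonneg_of_pos hsm (lt_of_lt_of_le hapos (le_max_left a b))
    -- expansions of gK
    have e1 : gK Ω m x ω = 2 * Real.log (dist x ω ^ m + max a w) - Real.log a - Real.log w :=
      gk_log _ a w hapos hwpos (Real.rpow_nonneg dist_nonneg m)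
    have e2 : gK Ω m y ω = 2 * Real.log (dist y ω ^ m + max b w) - Real.log b - Real.log w :=
      gk_log _ b w hbpos hwpos (Real.rpow_nonneg dist_nonneg m)
    have e3 : gK Ω 1 x y = 2 * Real.log (s + max a b) - Real.log a - Real.log b := by
      simp only [gK, Real.rpow_one]
      exact gk_log (dist x y) a b hapos hbpos dist_nonneg
    have e4 : gK Ω 1 x ω = 2 * Real.log (dist x ω + max a w) - Real.log a - Real.log w := by
      simp only [gK, Real.rpow_one]
      exact gk_log (dist x ω) a w hapos hwpos dist_nonneg
    have e5 : gK Ω 1 y ω = 2 * Real.log (dist y ω + max b w) - Real.log b - Real.log w := by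
      simp only [gK, Real.rpow_one]
      exact gk_log (dist y ω) b w hbpos hwpos dist_nonneg
    have e6 : gK Ω m x y = 2 * Real.log (s ^ m + max a b) - Real.log a - Real.log b :=
      gk_log _ a b hapos hbpos (Real.rpow_nonneg dist_nonneg m)
    have hwle : w ≤ 2 * R := hδle ω hω
    have hale : a ≤ 2 * R := hδle x hx
    have hble : b ≤ 2 * R := hδle y hy
    constructor
    · -- lower bound
      have h1 := hlow x hx ω hω
      have h2 := hlow y hy ω hω
      have h3 := hup x hx y hy
      have key1 : Real.log w ≤ Real.log (dist x ω ^ m + max a w) :=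
        Real.log_le_log hwpos
          (le_trans (le_max_right a w) (le_add_of_nonneg_left (Real.rpow_nonneg dist_nonneg m)))
      have key2 : Real.log w ≤ Real.log (dist y ω ^ m + max b w) :=
        Real.log_le_log hwpos
          (le_trans (le_max_right b w) (le_add_of_nonneg_left (Real.rpow_nonneg dist_nonneg m)))
      have hlog : Real.log (w * Real.exp (-(3 / 2 * C₀)) / (s + max a b)) =
          Real.log w + (-(3 / 2 * C₀)) - Real.log (s + max a b) := by
        rw [Real.log_div (by positivity) hMpos.ne', Real.log_mul hwpos.ne'
          (Real.exp_pos _).ne', Real.log_exp]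
      rw [hlog, gromovProd]
      rw [e1] at h1; rw [e2] at h2; rw [e3] at h3
      linarith
    · -- upper bound
      have h1 := hup x hx ω hω
      have h2 := hup y hy ω hω
      have h3 := hlow x hx y hy
      have keyA1 : Real.log (dist x ω + max a w) ≤ Real.log A := by
        apply Real.log_le_log
          (add_pos_of_nonneg_of_pos dist_nonneg (lt_of_lt_of_le hapos (le_max_left a w)))
        have := hdistω x hx
        have hmx : max a w ≤ 2 * R := max_le hale hwle
        rw [hA]; linarith
      have keyA2 : Real.log (dist y ω + max b w) ≤ Real.log A := by
        apply Real.log_le_log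
          (add_pos_of_nonneg_of_pos dist_nonneg (lt_of_lt_of_le hbpos (le_max_left b w)))
        have := hdistω y hy
        have hmy : max b w ≤ 2 * R := max_le hble hwle
        rw [hA]; linarith
      have hlog : Real.log (A * A * Real.exp (3 / 2 * C₀) / w / (s ^ m + max a b)) =
          Real.log A + Real.log A + 3 / 2 * C₀ - Real.log w - Real.log (s ^ m + max a b) := by
        rw [Real.log_div (by positivity) hMmpos.ne', Real.log_div (by positivity) hwpos.ne',
          Real.log_mul (by positivity) (Real.exp_pos _).ne',
          Real.log_mul hApos.ne' hApos.ne', Real.log_exp]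
        try ring
      rw [hlog, gromovProd]
      rw [e4] at h1; rw [e5] at h2; rw [e6] at h3
      linarith
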